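/- Let (Ω, F, P) be a probability space carrying random variables ε (real-valued), η (taking values in a measurable space E), and Z (taking values in a measurable space Z), and suppose the pair (ε, η) is independent of Z. Let g : Z × E → ℝ be jointly measurable and define X := g(Z, η). Then ε is conditionally independent of the pair (X, Z) given the σ-algebra σ(η): for all measurable sets A and B, P(ε ∈ A, (X,Z) ∈ B | σ(η)) = P(ε ∈ A | σ(η)) · P((X,Z) ∈ B | σ(η)) almost surely. -/

import Mathlib

open MeasureTheory

section Aux
open ProbabilityTheory ENNReal

theorem stmt7_aux {Ω E 𝒵 : Type*} {m' : MeasurableSpace Ω} {mΩ : MeasurableSpace Ω}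
    [MeasurableSpace E] [MeasurableSpace 𝒵]
    (μ : Measure Ω) [IsProbabilityMeasure μ]
    (ε : Ω → ℝ) (η : Ω → E) (Z : Ω → 𝒵)
    (hε : Measurable ε) (hη : Measurable η) (hZ : Measurable Z)
    (hm'η : m' = MeasurableSpace.comap η inferInstance)
    (hindep : ProbabilityTheory.IndepFun (fun ω => (ε ω, η ω)) Z μ)
    (g : 𝒵 × E → ℝ) (hg : Measurable g)
    (X : Ω → ℝ) (hX : X = fun ω => g (Z ω, η ω)) :
    ∀ A : Set ℝ, MeasurableSet A → ∀ B : Set (ℝ × 𝒵), MeasurableSet B →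
      μ[Set.indicator ({ω | ε ω ∈ A} ∩ {ω | (X ω, Z ω) ∈ B}) (fun _ => (1 : ℝ)) | m']
        =ᵐ[μ]
      fun ω =>
        (μ[Set.indicator {ω | ε ω ∈ A} (fun _ => (1 : ℝ)) | m']) ω *
        (μ[Set.indicator {ω | (X ω, Z ω) ∈ B} (fun _ => (1 : ℝ)) | m']) ω := by
  intro A hA B hB
  subst hm'η
  have hm' : MeasurableSpace.comap η inferInstance ≤ mΩ := hη.comap_le
  have hmeasm' : ∀ t : Set E, MeasurableSet t → MeasurableSet[MeasurableSpace.comap η inferInstance] (η ⁻¹' t) :=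
    fun t ht => ⟨t, ht, rfl⟩
  set p : Ω → 𝒵 × E := fun ω => (Z ω, η ω) with hp_def
  have hp : Measurable p := hZ.prodMk hη
  set S : Set Ω := {ω | ε ω ∈ A} with hS_def
  have hS : MeasurableSet S := hε hA
  set F : 𝒵 × E → ℝ × 𝒵 := fun q => (g q, q.1) with hF_def
  have hFm : Measurable F := hg.prodMk measurable_fst
  set D : Set (𝒵 × E) := F ⁻¹' B with hD_def
  have hD : MeasurableSet D := hFm hB
  have hT_eq : {ω | (X ω, Z ω) ∈ B} = p ⁻¹' D := by
    ext ω
    simp [hX, hD_def, hF_def, hp_def, Set.mem_preimage]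
  rw [hT_eq]
  set T : Set Ω := p ⁻¹' D with hT_def
  have hT : MeasurableSet T := hp hD
  have hSint : Integrable (S.indicator fun _ => (1 : ℝ)) μ :=
    (integrable_const (1 : ℝ)).indicator hS
  have hTint : Integrable (T.indicator fun _ => (1 : ℝ)) μ :=
    (integrable_const (1 : ℝ)).indicator hT
  set f : Ω → ℝ := μ[S.indicator fun _ => (1 : ℝ) | MeasurableSpace.comap η inferInstance] with hf_def
  set f₂ : Ω → ℝ := μ[T.indicator fun _ => (1 : ℝ) | MeasurableSpace.comap η inferInstance] with hf2_def
  have hf_sm : StronglyMeasurable[MeasurableSpace.comap η inferInstance] f := stronglyMeasurable_condExp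
  have hf2_sm : StronglyMeasurable[MeasurableSpace.comap η inferInstance] f₂ := stronglyMeasurable_condExp
  have hf_int : Integrable f μ := integrable_condExp
  have hf2_int : Integrable f₂ μ := integrable_condExp
  have hf_nonneg : 0 ≤ᵐ[μ] f :=
    condExp_nonneg
      (Filter.Eventually.of_forall fun ω => Set.indicator_nonneg (fun _ _ => zero_le_one) ω)
  -- set-integral identity over η-measurable sets
  have hCint : ∀ t : Set E, MeasurableSet t →
      ∫⁻ ω in η ⁻¹' t, ENNReal.ofReal (f ω) ∂μ = μ (S ∩ η ⁻¹' t) := by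
    intro t ht
    have h1 : ENNReal.ofReal (∫ ω in η ⁻¹' t, f ω ∂μ)
        = ∫⁻ ω in η ⁻¹' t, ENNReal.ofReal (f ω) ∂μ :=
      ofReal_integral_eq_lintegral_ofReal hf_int.restrict (ae_restrict_of_ae hf_nonneg)
    have h2 : ∫ ω in η ⁻¹' t, f ω ∂μ
        = ∫ ω in η ⁻¹' t, S.indicator (fun _ => (1 : ℝ)) ω ∂μ :=
      setIntegral_condExp hm' hSint (hmeasm' t ht)
    have h3 : ∫ ω in η ⁻¹' t, S.indicator (fun _ => (1 : ℝ)) ω ∂μ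
        = (μ (S ∩ η ⁻¹' t)).toReal := by
      rw [integral_indicator_const (1 : ℝ) hS, measureReal_restrict_apply hS, smul_eq_mul, mul_one,
        measureReal_def]
    rw [← h1, h2, h3, ENNReal.ofReal_toReal (measure_ne_top μ _)]
  have hηZ : IndepFun η Z μ := hindep.comp measurable_snd measurable_id
  have hfE_meas : Measurable[MeasurableSpace.comap η inferInstance] fun ω => ENNReal.ofReal (f ω) :=
    ENNReal.measurable_ofReal.comp hf_sm.measurable
  -- key measure identity
  have key : ∀ D' : Set (𝒵 × E), MeasurableSet D' →
      μ (S ∩ p ⁻¹' D') = ∫⁻ ω in p ⁻¹' D', ENNReal.ofReal (f ω) ∂μ := by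
    have hrect : ∀ s : Set 𝒵, MeasurableSet s → ∀ t : Set E, MeasurableSet t →
        ((μ.restrict S).map p) (s ×ˢ t)
          = ((μ.withDensity fun ω => ENNReal.ofReal (f ω)).map p) (s ×ˢ t) := by
      intro s hs t ht
      have hst : MeasurableSet (s ×ˢ t) := hs.prod ht
      have hpre : p ⁻¹' (s ×ˢ t) = Z ⁻¹' s ∩ η ⁻¹' t := Set.mk_preimage_prod Z η
      have hW : MeasurableSet (Z ⁻¹' s ∩ η ⁻¹' t) := (hZ hs).inter (hη ht)
      have lhs_eq : ((μ.restrict S).map p) (s ×ˢ t) = μ (S ∩ η ⁻¹' t) * μ (Z ⁻¹' s) := by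
        rw [Measure.map_apply hp hst, hpre, Measure.restrict_apply hW]
        have hset1 : (Z ⁻¹' s ∩ η ⁻¹' t) ∩ S
            = (fun ω => (ε ω, η ω)) ⁻¹' (A ×ˢ t) ∩ Z ⁻¹' s := by
          ext ω
          simp only [Set.mem_inter_iff, Set.mem_preimage, Set.mem_prod, hS_def,
            Set.mem_setOf_eq]
          tauto
        have hset2 : (fun ω => (ε ω, η ω)) ⁻¹' (A ×ˢ t) = S ∩ η ⁻¹' t := by
          ext ω
          simp [hS_def, Set.mem_preimage, Set.mem_prod]
        rw [hset1, hindep.measure_inter_preimage_eq_mul _ _ (hA.prod ht) hs, hset2]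
      have rhs_eq : ((μ.withDensity fun ω => ENNReal.ofReal (f ω)).map p) (s ×ˢ t)
          = μ (S ∩ η ⁻¹' t) * μ (Z ⁻¹' s) := by
        rw [Measure.map_apply hp hst, hpre, withDensity_apply _ hW,
          ← lintegral_indicator hW]
        have hfun : (fun ω => (Z ⁻¹' s ∩ η ⁻¹' t).indicator
              (fun ω => ENNReal.ofReal (f ω)) ω)
            = fun ω => ((η ⁻¹' t).indicator (fun ω => ENNReal.ofReal (f ω)) ω)
              * ((Z ⁻¹' s).indicator (fun _ => (1 : ENNReal)) ω) := by
          funext ω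
          by_cases h1 : ω ∈ Z ⁻¹' s <;> by_cases h2 : ω ∈ η ⁻¹' t <;>
            simp [Set.indicator_apply, h1, h2, Set.mem_inter_iff]
        rw [hfun,
          lintegral_mul_eq_lintegral_mul_lintegral_of_independent_measurableSpace
            hη.comap_le hZ.comap_le hηZ
            (hfE_meas.indicator (hmeasm' t ht))
            (measurable_const.indicator ⟨s, hs, rfl⟩),
          lintegral_indicator (hη ht), lintegral_indicator (hZ hs), hCint t ht,
          setLIntegral_one]
      rw [lhs_eq, rhs_eq]
    have hext : (μ.restrict S).map p
        = (μ.withDensity fun ω => ENNReal.ofReal (f ω)).map p := by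
      have htot : (μ.withDensity fun ω => ENNReal.ofReal (f ω)) Set.univ = μ S := by
        have h := hCint Set.univ MeasurableSet.univ
        simp only [Set.preimage_univ, Set.inter_univ, Measure.restrict_univ] at h
        rw [withDensity_apply _ MeasurableSet.univ, Measure.restrict_univ, h]
      haveI h2 : IsFiniteMeasure ((μ.withDensity fun ω => ENNReal.ofReal (f ω)).map p) := by
        constructor
        rw [Measure.map_apply hp MeasurableSet.univ, Set.preimage_univ, htot]
        exact measure_lt_top μ _
      haveI h1 : IsFiniteMeasure ((μ.restrict S).map p) := by
        constructor
        rw [Measure.map_apply hp MeasurableSet.univ]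
        exact measure_lt_top _ _
      refine ext_of_generate_finite _ generateFrom_prod.symm isPiSystem_prod ?_ ?_
      · rintro _ ⟨s, hs, t, ht, rfl⟩
        exact hrect s hs t ht
      · have := hrect Set.univ MeasurableSet.univ Set.univ MeasurableSet.univ
        simpa [Set.univ_prod_univ] using this
    intro D' hD'
    have h1 : μ (S ∩ p ⁻¹' D') = ((μ.restrict S).map p) D' := by
      rw [Measure.map_apply hp hD', Measure.restrict_apply (hp hD'), Set.inter_comm]
    rw [h1, hext, Measure.map_apply hp hD', withDensity_apply _ (hp hD')]
  -- real version of the key identity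
  have key_real : ∀ D' : Set (𝒵 × E), MeasurableSet D' →
      ∫ ω in p ⁻¹' D', f ω ∂μ = (μ (S ∩ p ⁻¹' D')).toReal := by
    intro D' hD'
    have h1 : ENNReal.ofReal (∫ ω in p ⁻¹' D', f ω ∂μ)
        = ∫⁻ ω in p ⁻¹' D', ENNReal.ofReal (f ω) ∂μ :=
      ofReal_integral_eq_lintegral_ofReal hf_int.restrict (ae_restrict_of_ae hf_nonneg)
    have h2 : (0 : ℝ) ≤ ∫ ω in p ⁻¹' D', f ω ∂μ :=
      integral_nonneg_of_ae (ae_restrict_of_ae hf_nonneg)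
    rw [← key D' hD'] at h1
    rw [← ENNReal.toReal_ofReal h2, h1]
  -- bounds on f
  have hf_le_one : f ≤ᵐ[μ] fun _ => (1 : ℝ) := by
    have h01 : f ≤ᵐ[μ] μ[(fun _ => (1 : ℝ)) | MeasurableSpace.comap η inferInstance] :=
      condExp_mono hSint (integrable_const (1 : ℝ))
        (Filter.Eventually.of_forall fun ω =>
          Set.indicator_le' (fun _ _ => le_rfl) (fun _ _ => zero_le_one) ω)
    rwa [condExp_const hm' (1 : ℝ)] at h01
  have hf_bound : ∀ᵐ ω ∂μ, ‖f ω‖ ≤ 1 := by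
    filter_upwards [hf_nonneg, hf_le_one] with ω h0 h1
    rw [Real.norm_eq_abs, abs_le]
    have h0' : (0 : ℝ) ≤ f ω := by simpa using h0
    exact ⟨by linarith, h1⟩
  have hg_meas : AEStronglyMeasurable[MeasurableSpace.comap η inferInstance]
      (fun ω => f ω * f₂ ω) μ :=
    ⟨fun ω => f ω * f₂ ω, hf_sm.mul hf2_sm, Filter.EventuallyEq.rfl⟩
  have hg_int : Integrable (fun ω => f ω * f₂ ω) μ :=
    hf2_int.bdd_mul (hf_sm.mono hm').aestronglyMeasurable hf_bound
  refine (ae_eq_condExp_of_forall_setIntegral_eq hm'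
    ((integrable_const (1 : ℝ)).indicator (hS.inter hT)) ?_ ?_ hg_meas).symm
  · intro s hs hμs
    exact hg_int.integrableOn
  · intro C hC hμC
    obtain ⟨G, hG, rfl⟩ := hC
    have hWm : MeasurableSet (η ⁻¹' G) := hη hG
    have hRHS : ∫ ω in η ⁻¹' G, (S ∩ T).indicator (fun _ => (1 : ℝ)) ω ∂μ
        = (μ (S ∩ T ∩ η ⁻¹' G)).toReal := by
      rw [integral_indicator_const (1 : ℝ) (hS.inter hT), measureReal_restrict_apply (hS.inter hT),
        smul_eq_mul, mul_one, measureReal_def]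
    set h : Ω → ℝ := fun ω => f ω * (η ⁻¹' G).indicator (fun _ => (1 : ℝ)) ω with hh_def
    have hh_sm : StronglyMeasurable[MeasurableSpace.comap η inferInstance] h :=
      hf_sm.mul (stronglyMeasurable_const.indicator ⟨G, hG, rfl⟩)
    have hDG : MeasurableSet (D ∩ Set.univ ×ˢ G) := hD.inter (MeasurableSet.univ.prod hG)
    have hTW : T ∩ η ⁻¹' G = p ⁻¹' (D ∩ Set.univ ×ˢ G) := by
      rw [Set.preimage_inter, Set.mk_preimage_prod, Set.preimage_univ, Set.univ_inter]
    have hmul_eq : (h * T.indicator fun _ => (1 : ℝ)) = (T ∩ η ⁻¹' G).indicator f := by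
      funext ω
      by_cases h1 : ω ∈ T <;> by_cases h2 : ω ∈ η ⁻¹' G <;>
        simp [hh_def, Set.indicator_apply, h1, h2, Set.mem_inter_iff]
    have hmulint : Integrable (h * T.indicator fun _ => (1 : ℝ)) μ := by
      rw [hmul_eq]; exact hf_int.indicator (hT.inter hWm)
    have hpull := condExp_mul_of_stronglyMeasurable_left hh_sm hmulint hTint
    calc ∫ ω in η ⁻¹' G, f ω * f₂ ω ∂μ
        = ∫ ω, (η ⁻¹' G).indicator (fun ω => f ω * f₂ ω) ω ∂μ := (integral_indicator hWm).symm
      _ = ∫ ω, h ω * f₂ ω ∂μ := by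
          congr 1
          funext ω
          by_cases h2 : ω ∈ η ⁻¹' G <;> simp [hh_def, Set.indicator_apply, h2]
      _ = ∫ ω, (μ[h * T.indicator fun _ => (1 : ℝ) |
            MeasurableSpace.comap η inferInstance]) ω ∂μ :=
          (integral_congr_ae hpull).symm
      _ = ∫ ω, (h * T.indicator fun _ => (1 : ℝ)) ω ∂μ := integral_condExp hm'
      _ = ∫ ω, (T ∩ η ⁻¹' G).indicator f ω ∂μ := by rw [hmul_eq]
      _ = ∫ ω in T ∩ η ⁻¹' G, f ω ∂μ := integral_indicator (hT.inter hWm)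
      _ = ∫ ω in p ⁻¹' (D ∩ Set.univ ×ˢ G), f ω ∂μ := by rw [hTW]
      _ = (μ (S ∩ p ⁻¹' (D ∩ Set.univ ×ˢ G))).toReal := key_real _ hDG
      _ = (μ (S ∩ T ∩ η ⁻¹' G)).toReal := by rw [← hTW, Set.inter_assoc]
      _ = ∫ ω in η ⁻¹' G, (S ∩ T).indicator (fun _ => (1 : ℝ)) ω ∂μ := hRHS.symm

end Aux

/-- Conditional independence of the structural error given the control variable:
if `(ε, η) ⊥ Z` and `X = g(Z, η)`, then for all measurable `A`, `B`,
`P(ε ∈ A, (X,Z) ∈ B | σ(η)) = P(ε ∈ A | σ(η)) · P((X,Z) ∈ B | σ(η))` a.s. -/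
theorem stmt_7 {Ω E 𝒵 : Type*} [MeasurableSpace Ω] [MeasurableSpace E] [MeasurableSpace 𝒵]
    (μ : Measure Ω) [IsProbabilityMeasure μ]
    (ε : Ω → ℝ) (η : Ω → E) (Z : Ω → 𝒵)
    (hε : Measurable ε) (hη : Measurable η) (hZ : Measurable Z)
    (hindep : ProbabilityTheory.IndepFun (fun ω => (ε ω, η ω)) Z μ)
    (g : 𝒵 × E → ℝ) (hg : Measurable g)
    (X : Ω → ℝ) (hX : X = fun ω => g (Z ω, η ω)) :
    ∀ A : Set ℝ, MeasurableSet A → ∀ B : Set (ℝ × 𝒵), MeasurableSet B →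
      μ[Set.indicator ({ω | ε ω ∈ A} ∩ {ω | (X ω, Z ω) ∈ B}) (fun _ => (1 : ℝ)) |
          MeasurableSpace.comap η inferInstance]
        =ᵐ[μ]
      fun ω =>
        (μ[Set.indicator {ω | ε ω ∈ A} (fun _ => (1 : ℝ)) |
            MeasurableSpace.comap η inferInstance]) ω *
        (μ[Set.indicator {ω | (X ω, Z ω) ∈ B} (fun _ => (1 : ℝ)) |
            MeasurableSpace.comap η inferInstance]) ω := by
  exact stmt7_aux μ ε η Z hε hη hZ rfl hindep g hg X hX
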